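/- Suppose σ = σ_1σ_2⋯σ_k is a permutation whose reverse avoids 132 (equivalently, σ avoids 231). Then the permutation σ̂ = σ_2σ_1σ_3⋯σ_k contains the pattern 231 if and only if σ_1 > σ_2 > σ_3 (i.e. the first three entries of σ form a decreasing sequence). -/
import Mathlib


def Avoids231 {n : ℕ} (π : Fin n → Fin n) : Prop :=
  ¬ ∃ i j k : Fin n, i < j ∧ j < k ∧ π k < π i ∧ π i < π j

theorem hat_contains_231_iff (k : ℕ) (hk : 3 ≤ k) (σ : Equiv.Perm (Fin k))
    (hav : Avoids231 ⇑σ) :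
    ¬ Avoids231 (⇑σ ∘ ⇑(Equiv.swap (⟨0, by omega⟩ : Fin k) ⟨1, by omega⟩)) ↔
      (σ ⟨1, by omega⟩ < σ ⟨0, by omega⟩ ∧ σ ⟨2, by omega⟩ < σ ⟨1, by omega⟩) := by
  set o : Fin k := ⟨0, by omega⟩ with ho
  set l : Fin k := ⟨1, by omega⟩ with hl
  set t : Fin k := ⟨2, by omega⟩ with ht
  have hswap : ∀ x : Fin k, 2 ≤ x.val →
      Equiv.swap o l x = x := by
    intro x hx
    apply Equiv.swap_apply_of_ne_of_ne
    · intro h; rw [h] at hx; simp [ho] at hx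
    · intro h; rw [h] at hx; simp [hl] at hx
  constructor
  · intro h
    rw [Avoids231, not_not] at h
    obtain ⟨i, j, m, hij, hjm, h1, h2⟩ := h
    have hijv : i.val < j.val := hij
    have hjmv : j.val < m.val := hjm
    have hm2 : 2 ≤ m.val := by omega
    have hmeq : (Equiv.swap o l) m = m := hswap m hm2
    simp only [Function.comp_apply, hmeq] at h1 h2
    rcases Nat.lt_or_ge j.val 2 with hj2 | hj2
    · -- j.val = 1, i.val = 0
      have hjl : j = l := Fin.ext (by simp [hl]; omega)
      have hio : i = o := Fin.ext (by simp [ho]; omega)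
      rw [hio, Equiv.swap_apply_left] at h1 h2
      rw [hjl, Equiv.swap_apply_right] at h2
      refine ⟨h2, ?_⟩
      rcases eq_or_lt_of_le hm2 with hm | hm
      · have : m = t := Fin.ext (by simp [ht]; omega)
        rw [this] at h1; exact h1
      · -- m.val > 2
        by_contra hc
        push_neg at hc
        have hne : σ l ≠ σ t := by
          intro he
          have := σ.injective he
          simp [hl, ht, Fin.ext_iff] at this
        have hlt : σ l < σ t := lt_of_le_of_ne hc hne
        exact hav ⟨l, t, m, by simp [hl, ht, Fin.lt_def],
          by simp [ht, Fin.lt_def]; omega, h1, hlt⟩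
    · -- j.val ≥ 2
      have hjeq : (Equiv.swap o l) j = j := hswap j hj2
      rw [hjeq] at h2
      rcases Nat.lt_or_ge i.val 2 with hi2 | hi2
      · interval_cases hiv : i.val
        · have hio : i = o := Fin.ext (by simp [ho, hiv])
          rw [hio, Equiv.swap_apply_left] at h1 h2
          exact absurd ⟨l, j, m, by simp [hl, Fin.lt_def]; omega, hjm, h1, h2⟩ hav
        · have hil : i = l := Fin.ext (by simp [hl, hiv])
          rw [hil, Equiv.swap_apply_right] at h1 h2
          exact absurd ⟨o, j, m, by simp [ho, Fin.lt_def]; omega, hjm, h1, h2⟩ hav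
      · have hieq : (Equiv.swap o l) i = i := hswap i hi2
        rw [hieq] at h1 h2
        exact absurd ⟨i, j, m, hij, hjm, h1, h2⟩ hav
  · rintro ⟨h01, h12⟩ hA
    apply hA
    refine ⟨o, l, t, by simp [ho, hl, Fin.lt_def], by simp [hl, ht, Fin.lt_def], ?_, ?_⟩
    · simp only [Function.comp_apply, Equiv.swap_apply_left,
        hswap t (by simp [ht])]
      exact h12
    · simp only [Function.comp_apply, Equiv.swap_apply_left, Equiv.swap_apply_right]
      exact h01
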